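/- The polynomial P₇₂(z) = (1 − z)⁹ − (135/16)(1 − z)⁶ z² + (60345/4096)(1 − z)³ z⁴ − (53325/32768) z⁶ is strictly decreasing on the interval [0, 1/4]; in particular its derivative is negative for all z in [0, 1/4]. -/

import Mathlib

/-! The derivative of `P72` splits as a cubic plus `z ^ 4` times a quartic. On `[0, 1/4]` the cubic
is at most the quadratic `-9 + 441/8 z - 352071/4096 z ^ 2`, whose discriminant is negative, and
the quartic is dominated by its constant term `-29655/4096`; so the derivative is negative there. -/

/-- Denominator polynomial of the secrecy function of the extremal even
unimodular lattice in dimension 72. -/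
noncomputable def P72 (z : ℝ) : ℝ :=
  (1 - z) ^ 9 - 135 / 16 * (1 - z) ^ 6 * z ^ 2 + 60345 / 4096 * (1 - z) ^ 3 * z ^ 4
    - 53325 / 32768 * z ^ 6

noncomputable def P72Deriv (z : ℝ) : ℝ :=
  (-9 + 441 / 8 * z - 801 / 8 * z ^ 2 + 58041 / 1024 * z ^ 3)
    + z ^ 4 * (-29655 / 4096 + 801 / 16384 * z - 3087 / 4096 * z ^ 2 + 9 / 2 * z ^ 3 - 9 * z ^ 4)

theorem hasDerivAt_P72 (z : ℝ) : HasDerivAt P72 (P72Deriv z) z := by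
  have hsub : HasDerivAt (fun y : ℝ => 1 - y) (-1) z := by
    simpa using (hasDerivAt_id z).const_sub 1
  have h := (((hsub.pow 9).sub (((hsub.pow 6).const_mul (135 / 16)).mul (hasDerivAt_pow 2 z))).add
      (((hsub.pow 3).const_mul (60345 / 4096)).mul (hasDerivAt_pow 4 z))).sub
      ((hasDerivAt_pow 6 z).const_mul (53325 / 32768))
  refine h.congr_deriv ?_
  simp only [P72Deriv, Pi.pow_apply]
  ring

theorem P72Deriv_cubic_part_neg {z : ℝ} (hz : z ∈ Set.Icc (0 : ℝ) (1 / 4)) :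
    -9 + 441 / 8 * z - 801 / 8 * z ^ 2 + 58041 / 1024 * z ^ 3 < 0 := by
  have hcube : z ^ 3 ≤ z ^ 2 / 4 := by
    nlinarith [mul_le_mul_of_nonneg_left hz.2 (sq_nonneg z)]
  have hquad : -9 + 441 / 8 * z - 352071 / 4096 * z ^ 2 < 0 := by
    nlinarith [sq_nonneg (z - 112896 / 352071)]
  linarith

theorem P72Deriv_quartic_part_neg {z : ℝ} (hz : z ∈ Set.Icc (0 : ℝ) (1 / 4)) :
    -29655 / 4096 + 801 / 16384 * z - 3087 / 4096 * z ^ 2 + 9 / 2 * z ^ 3 - 9 * z ^ 4 < 0 := by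
  obtain ⟨hz₀, hz₁⟩ := hz
  have hcube : z ^ 3 ≤ 1 / 64 := by
    calc z ^ 3 ≤ (1 / 4) ^ 3 := pow_le_pow_left₀ hz₀ hz₁ 3
      _ = 1 / 64 := by norm_num
  nlinarith [pow_nonneg hz₀ 2, pow_nonneg hz₀ 4]

theorem P72Deriv_neg {z : ℝ} (hz : z ∈ Set.Icc (0 : ℝ) (1 / 4)) : P72Deriv z < 0 :=
  add_neg_of_neg_of_nonpos (P72Deriv_cubic_part_neg hz)
    (mul_nonpos_of_nonneg_of_nonpos (pow_nonneg hz.1 4) (P72Deriv_quartic_part_neg hz).le)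

theorem P72_strictAnti :
    StrictAntiOn P72 (Set.Icc (0 : ℝ) (1 / 4)) ∧
      ∀ z ∈ Set.Icc (0 : ℝ) (1 / 4), deriv P72 z < 0 := by
  have hderiv : ∀ z ∈ Set.Icc (0 : ℝ) (1 / 4), deriv P72 z < 0 := fun z hz =>
    (hasDerivAt_P72 z).deriv ▸ P72Deriv_neg hz
  refine ⟨strictAntiOn_of_deriv_neg (convex_Icc _ _) ?_ ?_, hderiv⟩
  · exact fun z _ => (hasDerivAt_P72 z).continuousAt.continuousWithinAt
  · intro z hz
    rw [interior_Icc] at hz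
    exact hderiv z (Set.Ioo_subset_Icc_self hz)
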